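/- Theorem 1 (asymptotic convergence of the thrust-MRAC tracking error): let b > 0, Γ_t > 0, let L_t be a symmetric positive-definite 3×3 real matrix, let t_d : ℝ → ℝ³ be continuous and bounded, and let e_v : ℝ → ℝ³ and k̃_t : ℝ → ℝ be continuously differentiable functions satisfying, for all t ≥ 0, ė_v = −L_t e_v + b k̃_t t_d and k̃'_t = −Γ_t ⟪e_v, t_d⟫. Then e_v(t) → 0 as t → ∞. -/

import Mathlib

/-!
Along solutions, `V = (e ⬝ᵥ e) / 2 + b / (2Γ) k²` satisfies `V' = -e ⬝ᵥ L e ≤ 0`. Hence `e` and `k`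
stay bounded, so `ė` is bounded and `e ⬝ᵥ e` is uniformly continuous on `[0, ∞)`; moreover
`μ ∫₀^∞ e ⬝ᵥ e ≤ V(0)` for any `μ > 0` with `μ • 1 ≤ L`. Barbalat's lemma then gives `e ⬝ᵥ e → 0`.
-/

open Matrix Set Filter Topology MeasureTheory

theorem integrableOn_Ioi_of_intervalIntegral_le {f : ℝ → ℝ} {a B : ℝ}
    (hf : ContinuousOn f (Ici a)) (hf₀ : ∀ t ≥ a, 0 ≤ f t)
    (hB : ∀ t ≥ a, ∫ s in a..t, f s ≤ B) : IntegrableOn f (Ioi a) := by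
  refine integrableOn_Ioi_of_intervalIntegral_norm_bounded B a (b := id)
    (fun t => ?_) tendsto_id ?_
  · exact ((hf.mono Icc_subset_Ici_self).integrableOn_Icc).mono_set Ioc_subset_Icc_self
  · filter_upwards [eventually_ge_atTop a] with t ht
    calc ∫ x in a..t, ‖f x‖ = ∫ x in a..t, f x :=
          intervalIntegral.integral_congr fun x hx =>
            Real.norm_of_nonneg (hf₀ x (uIcc_of_le ht ▸ hx).1)
      _ ≤ B := hB t ht

theorem tendsto_atTop_zero_of_uniformContinuousOn_of_integral_le {f : ℝ → ℝ} {a B : ℝ}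
    (hf : UniformContinuousOn f (Ici a)) (hf₀ : ∀ t ≥ a, 0 ≤ f t)
    (hB : ∀ t ≥ a, ∫ s in a..t, f s ≤ B) : Tendsto f atTop (𝓝 0) := by
  have hint : ∀ s t, a ≤ s → a ≤ t → IntervalIntegrable f volume s t := fun s t hs ht =>
    (hf.continuousOn.mono fun _ hx => (le_inf hs ht).trans hx.1).intervalIntegrable
  have hF := intervalIntegral_tendsto_integral_Ioi a
    (integrableOn_Ioi_of_intervalIntegral_le hf.continuousOn hf₀ hB) tendsto_id
  rw [Metric.tendsto_atTop]
  intro ε hε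
  obtain ⟨δ, hδ, hfδ⟩ := Metric.uniformContinuousOn_iff_le.1 hf (ε / 2) (half_pos hε)
  -- `f ≥ ε` at a time `t` forces `f ≥ ε / 2` on `[t, t + δ]`, but the integrals of `f` over
  -- windows of length `δ` tend to zero.
  have hwindow : Tendsto (fun t => (∫ s in a..t + δ, f s) - ∫ s in a..t, f s) atTop (𝓝 0) := by
    simpa using (hF.comp (tendsto_atTop_add_const_right _ δ tendsto_id)).sub hF
  obtain ⟨N, hN⟩ := eventually_atTop.1 ((hwindow.eventually
    (gt_mem_nhds (by positivity : (0:ℝ) < δ * ε / 2))).and (eventually_ge_atTop a))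
  refine ⟨N, fun t ht => ?_⟩
  obtain ⟨hsmall, hat⟩ := hN t ht
  rw [Real.dist_0_eq_abs, abs_of_nonneg (hf₀ t hat)]
  by_contra! hlarge
  have hlow : ∀ x ∈ Icc t (t + δ), ε / 2 ≤ f x := fun x hx => by
    have hdist : dist x t ≤ δ := by
      rw [Real.dist_eq, abs_of_nonneg (by linarith [hx.1])]; linarith [hx.2]
    linarith [(abs_le.1 (Real.dist_eq _ _ ▸ hfδ x (hat.trans hx.1) t hat hdist)).1]
  have hmass : δ * ε / 2 ≤ ∫ s in t..t + δ, f s := by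
    simpa using intervalIntegral.integral_mono_on (by linarith) intervalIntegrable_const
      (hint t (t + δ) hat (by linarith)) hlow
  rw [intervalIntegral.integral_interval_sub_left (hint a _ le_rfl (by linarith))
    (hint a t le_rfl hat)] at hsmall
  linarith

theorem norm_le_sqrt_dotProduct_self {ι : Type*} [Fintype ι] (x : ι → ℝ) : ‖x‖ ≤ √(x ⬝ᵥ x) :=
  (pi_norm_le_iff_of_nonneg (Real.sqrt_nonneg _)).2 fun i => by
    rw [Real.norm_eq_abs, ← Real.sqrt_sq_eq_abs, sq]
    exact Real.sqrt_le_sqrt (Finset.single_le_sum (fun j _ => mul_self_nonneg (x j))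
      (Finset.mem_univ i))

open scoped MatrixOrder in
theorem Matrix.PosDef.exists_pos_mul_dotProduct_self_le {ι : Type*} [Fintype ι]
    {L : Matrix ι ι ℝ} (hL : L.PosDef) : ∃ μ > 0, ∀ x, μ * (x ⬝ᵥ x) ≤ x ⬝ᵥ (L *ᵥ x) := by
  classical
  cases isEmpty_or_nonempty ι
  · exact ⟨1, one_pos, fun x => by simp [dotProduct]⟩
  -- in the C⋆-algebra of matrices, the strictly positive `L` dominates `μ • 1` for some `μ > 0`
  obtain ⟨μ, hμ, hle⟩ := (CFC.exists_pos_algebraMap_le_iff hL.isHermitian.isSelfAdjoint).2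
    fun _ hx => hL.isStrictlyPositive.spectrum_pos hx
  refine ⟨μ, hμ, fun x => ?_⟩
  simpa [sub_mulVec, dotProduct_sub, Algebra.algebraMap_eq_smul_one, smul_mulVec,
    dotProduct_smul] using hle.dotProduct_mulVec_nonneg x

theorem HasDerivAt.dotProduct {𝕜 ι : Type*} [NontriviallyNormedField 𝕜] [Fintype ι]
    {f g : 𝕜 → ι → 𝕜} {f' g' : ι → 𝕜} {x : 𝕜} (hf : HasDerivAt f f' x) (hg : HasDerivAt g g' x) :
    HasDerivAt (fun y => f y ⬝ᵥ g y) (f' ⬝ᵥ g x + f x ⬝ᵥ g') x := by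
  simp only [_root_.dotProduct, ← Finset.sum_add_distrib]
  exact HasDerivAt.fun_sum fun i _ => (hasDerivAt_pi.1 hf i).fun_mul (hasDerivAt_pi.1 hg i)

section ErrorDynamics

variable {ι : Type*} [Fintype ι]

noncomputable def errorLyapunov (b Γ : ℝ) (e : ℝ → ι → ℝ) (k : ℝ → ℝ) (t : ℝ) : ℝ :=
  (e t ⬝ᵥ e t) / 2 + b / (2 * Γ) * k t ^ 2

variable {b Γ : ℝ} {L : Matrix ι ι ℝ} {d e : ℝ → ι → ℝ} {k : ℝ → ℝ}

theorem dotProduct_self_le_two_mul_errorLyapunov (hb : 0 ≤ b) (hΓ : 0 ≤ Γ) (t : ℝ) :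
    e t ⬝ᵥ e t ≤ 2 * errorLyapunov b Γ e k t := by
  have : 0 ≤ b / (2 * Γ) * k t ^ 2 := by positivity
  unfold errorLyapunov
  linarith

theorem mul_sq_le_errorLyapunov (t : ℝ) : b / (2 * Γ) * k t ^ 2 ≤ errorLyapunov b Γ e k t := by
  have : 0 ≤ e t ⬝ᵥ e t := by simpa using dotProduct_star_self_nonneg (e t)
  unfold errorLyapunov
  linarith

theorem errorLyapunov_nonneg (hb : 0 ≤ b) (hΓ : 0 ≤ Γ) (t : ℝ) : 0 ≤ errorLyapunov b Γ e k t :=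
  (mul_nonneg (div_nonneg hb (by positivity)) (sq_nonneg _)).trans (mul_sq_le_errorLyapunov t)

structure IsMRACErrorSolution (b Γ : ℝ) (L : Matrix ι ι ℝ) (d e : ℝ → ι → ℝ) (k : ℝ → ℝ) :
    Prop where
  hasDerivAt_e : ∀ t ≥ 0, HasDerivAt e (-(L *ᵥ e t) + (b * k t) • d t) t
  hasDerivAt_k : ∀ t ≥ 0, HasDerivAt k (-(Γ * (e t ⬝ᵥ d t))) t

namespace IsMRACErrorSolution

theorem continuousOn_e (h : IsMRACErrorSolution b Γ L d e k) : ContinuousOn e (Ici 0) :=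
  fun t ht => (h.hasDerivAt_e t ht).continuousAt.continuousWithinAt

theorem hasDerivAt_errorLyapunov (h : IsMRACErrorSolution b Γ L d e k) (hΓ : Γ ≠ 0) {t : ℝ}
    (ht : 0 ≤ t) : HasDerivAt (errorLyapunov b Γ e k) (-(e t ⬝ᵥ (L *ᵥ e t))) t := by
  have hV := (((h.hasDerivAt_e t ht).dotProduct (h.hasDerivAt_e t ht)).div_const 2).add
    (((h.hasDerivAt_k t ht).pow 2).const_mul (b / (2 * Γ)))
  refine hV.congr_deriv ?_
  rw [dotProduct_comm _ (e t)]
  simp only [dotProduct_add, dotProduct_neg, dotProduct_smul, smul_eq_mul]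
  field_simp
  ring

theorem intervalIntegrable_comp (h : IsMRACErrorSolution b Γ L d e k) {φ : (ι → ℝ) → ℝ}
    (hφ : Continuous φ) {t : ℝ} (ht : 0 ≤ t) : IntervalIntegrable (fun s => φ (e s)) volume 0 t :=
  ((hφ.comp_continuousOn h.continuousOn_e).mono
    (uIcc_of_le ht ▸ Icc_subset_Ici_self)).intervalIntegrable

theorem antitoneOn_errorLyapunov (h : IsMRACErrorSolution b Γ L d e k) (hΓ : Γ ≠ 0)
    (hL : L.PosSemidef) : AntitoneOn (errorLyapunov b Γ e k) (Ici 0) :=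
  antitoneOn_of_hasDerivWithinAt_nonpos (convex_Ici 0)
    (fun _ ht => (h.hasDerivAt_errorLyapunov hΓ ht).continuousAt.continuousWithinAt)
    (fun _ ht => (h.hasDerivAt_errorLyapunov hΓ (interior_subset ht)).hasDerivWithinAt)
    fun t _ => neg_nonpos.2 (by simpa using hL.dotProduct_mulVec_nonneg (e t))

theorem integral_dotProduct_mulVec_eq (h : IsMRACErrorSolution b Γ L d e k) (hΓ : Γ ≠ 0)
    {t : ℝ} (ht : 0 ≤ t) :
    ∫ s in 0..t, e s ⬝ᵥ (L *ᵥ e s) = errorLyapunov b Γ e k 0 - errorLyapunov b Γ e k t := by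
  rw [← neg_sub, ← intervalIntegral.integral_eq_sub_of_hasDerivAt
    (fun s hs => h.hasDerivAt_errorLyapunov hΓ (uIcc_of_le ht ▸ hs).1)
    (h.intervalIntegrable_comp (φ := fun x => x ⬝ᵥ (L *ᵥ x)) (by fun_prop) ht).neg,
    intervalIntegral.integral_neg, neg_neg]

theorem exists_integral_dotProduct_self_le (h : IsMRACErrorSolution b Γ L d e k) (hb : 0 ≤ b)
    (hΓ : 0 < Γ) (hL : L.PosDef) : ∃ B, ∀ t ≥ 0, ∫ s in 0..t, e s ⬝ᵥ e s ≤ B := by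
  obtain ⟨μ, hμ, hμL⟩ := hL.exists_pos_mul_dotProduct_self_le
  refine ⟨errorLyapunov b Γ e k 0 / μ, fun t ht => ?_⟩
  rw [le_div_iff₀' hμ, ← intervalIntegral.integral_const_mul]
  calc ∫ s in 0..t, μ * (e s ⬝ᵥ e s)
      ≤ ∫ s in 0..t, e s ⬝ᵥ (L *ᵥ e s) :=
        intervalIntegral.integral_mono_on ht
          (h.intervalIntegrable_comp (φ := fun x => μ * (x ⬝ᵥ x)) (by fun_prop) ht)
          (h.intervalIntegrable_comp (φ := fun x => x ⬝ᵥ (L *ᵥ x)) (by fun_prop) ht)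
          fun s _ => hμL (e s)
    _ = errorLyapunov b Γ e k 0 - errorLyapunov b Γ e k t :=
        h.integral_dotProduct_mulVec_eq hΓ.ne' ht
    _ ≤ errorLyapunov b Γ e k 0 := sub_le_self _ (errorLyapunov_nonneg hb hΓ.le t)

theorem exists_forall_norm_le_and_abs_le (h : IsMRACErrorSolution b Γ L d e k) (hb : 0 < b)
    (hΓ : 0 < Γ) (hL : L.PosSemidef) : ∃ R K, ∀ t ≥ 0, ‖e t‖ ≤ R ∧ |k t| ≤ K := by
  set V₀ := errorLyapunov b Γ e k 0
  refine ⟨√(2 * V₀), √(2 * Γ / b * V₀), fun t ht => ⟨?_, ?_⟩⟩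
  all_goals have hV : errorLyapunov b Γ e k t ≤ V₀ :=
    h.antitoneOn_errorLyapunov hΓ.ne' hL self_mem_Ici ht ht
  · refine (norm_le_sqrt_dotProduct_self (e t)).trans (Real.sqrt_le_sqrt ?_)
    linarith [dotProduct_self_le_two_mul_errorLyapunov (e := e) (k := k) hb.le hΓ.le t]
  · rw [← Real.sqrt_sq_eq_abs]
    refine Real.sqrt_le_sqrt ?_
    calc k t ^ 2 = 2 * Γ / b * (b / (2 * Γ) * k t ^ 2) := by field_simp
      _ ≤ 2 * Γ / b * V₀ := by gcongr; exact (mul_sq_le_errorLyapunov t).trans hV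

theorem uniformContinuousOn_e (h : IsMRACErrorSolution b Γ L d e k) (hb : 0 < b) (hΓ : 0 < Γ)
    (hL : L.PosSemidef) {C : ℝ} (hd : ∀ t, ‖d t‖ ≤ C) : UniformContinuousOn e (Ici 0) := by
  obtain ⟨R, K, hRK⟩ := h.exists_forall_norm_le_and_abs_le hb hΓ hL
  set A := LinearMap.toContinuousLinearMap (Matrix.mulVecLin L)
  have hK : 0 ≤ K := (abs_nonneg _).trans (hRK 0 le_rfl).2
  have hė : ∀ t ≥ 0, ‖-(L *ᵥ e t) + (b * k t) • d t‖ ≤ ‖A‖ * R + b * K * C := by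
    intro t ht
    obtain ⟨hR, hk⟩ := hRK t ht
    calc ‖-(L *ᵥ e t) + (b * k t) • d t‖ ≤ ‖L *ᵥ e t‖ + b * |k t| * ‖d t‖ := by
          simpa [norm_smul, abs_mul, abs_of_pos hb, mul_assoc] using
            norm_add_le (-(L *ᵥ e t)) ((b * k t) • d t)
      _ ≤ ‖A‖ * R + b * K * C := by
          gcongr
          · exact (A.le_opNorm (e t)).trans (by gcongr)
          · exact hd t
  have hLip := (convex_Ici (0 : ℝ)).lipschitzOnWith_of_nnnorm_hasDerivWithin_le
    (C := (‖A‖ * R + b * K * C).toNNReal) (fun t ht => (h.hasDerivAt_e t ht).hasDerivWithinAt)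
    fun t ht => by
      rw [← NNReal.coe_le_coe, coe_nnnorm, Real.coe_toNNReal']
      exact (hė t ht).trans (le_max_left _ _)
  exact hLip.uniformContinuousOn

theorem uniformContinuousOn_dotProduct_self (h : IsMRACErrorSolution b Γ L d e k) (hb : 0 < b)
    (hΓ : 0 < Γ) (hL : L.PosSemidef) {C : ℝ} (hd : ∀ t, ‖d t‖ ≤ C) :
    UniformContinuousOn (fun t => e t ⬝ᵥ e t) (Ici 0) := by
  obtain ⟨R, _, hR⟩ := h.exists_forall_norm_le_and_abs_le hb hΓ hL
  have hφ : UniformContinuousOn (fun x : ι → ℝ => x ⬝ᵥ x) (Metric.closedBall 0 R) :=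
    (isCompact_closedBall (0 : ι → ℝ) R).uniformContinuousOn_of_continuous
      (by fun_prop : Continuous fun x : ι → ℝ => x ⬝ᵥ x).continuousOn
  exact hφ.comp (h.uniformContinuousOn_e hb hΓ hL hd) fun t ht =>
    mem_closedBall_zero_iff.2 (hR t ht).1

theorem tendsto_zero (h : IsMRACErrorSolution b Γ L d e k) (hb : 0 < b) (hΓ : 0 < Γ)
    (hL : L.PosDef) {C : ℝ} (hd : ∀ t, ‖d t‖ ≤ C) : Tendsto e atTop (𝓝 0) := by
  obtain ⟨B, hB⟩ := h.exists_integral_dotProduct_self_le hb.le hΓ hL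
  have hW : Tendsto (fun t => e t ⬝ᵥ e t) atTop (𝓝 0) :=
    tendsto_atTop_zero_of_uniformContinuousOn_of_integral_le
      (h.uniformContinuousOn_dotProduct_self hb hΓ hL.posSemidef hd)
      (fun t _ => by simpa using dotProduct_star_self_nonneg (e t)) hB
  exact squeeze_zero_norm (fun t => norm_le_sqrt_dotProduct_self (e t)) (by simpa using hW.sqrt)

end IsMRACErrorSolution

end ErrorDynamics

theorem thrust_mrac_asymptotic_convergence_general
    (b Γt : ℝ) (hb : 0 < b) (hΓ : 0 < Γt)
    (Lt : Matrix (Fin 3) (Fin 3) ℝ) (hLt : Lt.PosDef)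
    (td : ℝ → Fin 3 → ℝ) (htdb : ∃ C, ∀ t, ‖td t‖ ≤ C)
    (e : ℝ → Fin 3 → ℝ) (kt : ℝ → ℝ)
    (he : ContDiff ℝ 1 e) (hk : ContDiff ℝ 1 kt)
    (hde : ∀ t ≥ (0:ℝ), deriv e t = -(Lt *ᵥ e t) + (b * kt t) • td t)
    (hdk : ∀ t ≥ (0:ℝ), deriv kt t = -(Γt * (e t ⬝ᵥ td t))) :
    Filter.Tendsto e Filter.atTop (nhds 0) := by
  obtain ⟨C, hC⟩ := htdb
  have hsol : IsMRACErrorSolution b Γt Lt td e kt :=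
    ⟨fun t ht => hde t ht ▸ (he.differentiable one_ne_zero t).hasDerivAt,
      fun t ht => hdk t ht ▸ (hk.differentiable one_ne_zero t).hasDerivAt⟩
  exact hsol.tendsto_zero hb hΓ hLt hC

/-- Theorem 1: asymptotic convergence of the thrust-MRAC tracking error
`e_v(t) → 0` as `t → ∞`. -/
theorem thrust_mrac_asymptotic_convergence
    (b Γt : ℝ) (hb : 0 < b) (hΓ : 0 < Γt)
    (Lt : Matrix (Fin 3) (Fin 3) ℝ) (hLt : Lt.PosDef)
    (td : ℝ → Fin 3 → ℝ) (htdc : Continuous td) (htdb : ∃ C, ∀ t, ‖td t‖ ≤ C)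
    (e : ℝ → Fin 3 → ℝ) (kt : ℝ → ℝ)
    (he : ContDiff ℝ 1 e) (hk : ContDiff ℝ 1 kt)
    (hde : ∀ t ≥ (0:ℝ), deriv e t = -(Lt *ᵥ e t) + (b * kt t) • td t)
    (hdk : ∀ t ≥ (0:ℝ), deriv kt t = -(Γt * (e t ⬝ᵥ td t))) :
    Filter.Tendsto e Filter.atTop (nhds 0) :=
  thrust_mrac_asymptotic_convergence_general b Γt hb hΓ Lt hLt td htdb e kt he hk hde hdk
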